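/- arXiv:2004.03598 — 3 statements merged into one kernel-verified Lean document; each statement's English description precedes it below -/
import Mathlib

section
/- For every λ ∈ ℂ, the 6-dimensional complex algebra N⁶₂₉(λ) with basis e₁,...,e₆ and nonzero products e₁e₁ = e₂, e₁e₂ = e₃, e₁e₃ = (2-λ)e₄, e₁e₄ = (3-2λ)e₅, e₁e₅ = (4-3λ)e₆, e₂e₁ = λe₃, e₂e₂ = λe₄, e₂e₃ = λ(2-λ)e₅, e₂e₄ = λ(3-2λ)e₆, e₃e₁ = λe₄, e₃e₂ = λe₅, e₃e₃ = λ(2-λ)e₆, e₄e₁ = λe₅, e₄e₂ = λe₆, e₅e₁ = λe₆ is a Novikov algebra generated by the single element e₁. -/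
/-- The 6-dimensional algebra `N⁶₂₉(λ)` over ℂ, with basis `e₁,…,e₆` and
nonzero products `e₁e₁ = e₂`, `e₁e₂ = e₃`, `e₁e₃ = (2-λ)e₄`,
`e₁e₄ = (3-2λ)e₅`, `e₁e₅ = (4-3λ)e₆`, `e₂e₁ = λe₃`, `e₂e₂ = λe₄`,
`e₂e₃ = λ(2-λ)e₅`, `e₂e₄ = λ(3-2λ)e₆`, `e₃e₁ = λe₄`, `e₃e₂ = λe₅`,
`e₃e₃ = λ(2-λ)e₆`, `e₄e₁ = λe₅`, `e₄e₂ = λe₆`, `e₅e₁ = λe₆`. -/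
noncomputable def mulN629 (l : ℂ) (a b : Fin 6 → ℂ) : Fin 6 → ℂ :=
  ![0, a 0 * b 0,
    a 0 * b 1 + l * (a 1 * b 0),
    (2 - l) * (a 0 * b 2) + l * (a 1 * b 1) + l * (a 2 * b 0),
    (3 - 2 * l) * (a 0 * b 3) + l * (2 - l) * (a 1 * b 2)
      + l * (a 2 * b 1) + l * (a 3 * b 0),
    (4 - 3 * l) * (a 0 * b 4) + l * (3 - 2 * l) * (a 1 * b 3)
      + l * (2 - l) * (a 2 * b 2) + l * (a 3 * b 1) + l * (a 4 * b 0)]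

private lemma cons_val_five' {α : Type*} {m : ℕ} (x : α)
    (u : Fin (m + 5) → α) : Matrix.vecCons x u 5 = u 4 := rfl

set_option maxHeartbeats 2000000 in
/-- For every `λ ∈ ℂ`, `N⁶₂₉(λ)` is a Novikov algebra generated by the single
element `e₁`: any submodule containing `e₁` and closed under the product is
the whole algebra. -/
theorem N629_is_novikov_one_generated (l : ℂ) :
    (∀ x y z : Fin 6 → ℂ,
      mulN629 l (mulN629 l x y) z = mulN629 l (mulN629 l x z) y ∧
      mulN629 l (mulN629 l x y) z - mulN629 l x (mulN629 l y z)
        = mulN629 l (mulN629 l y x) z - mulN629 l y (mulN629 l x z)) ∧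
    (∀ S : Submodule ℂ (Fin 6 → ℂ),
      (Pi.single 0 1 : Fin 6 → ℂ) ∈ S →
      (∀ x ∈ S, ∀ y ∈ S, mulN629 l x y ∈ S) → S = ⊤) := by
  constructor
  · intro x y z
    constructor <;>
    · funext i
      fin_cases i <;>
        · simp only [mulN629, Pi.sub_apply, Matrix.cons_val_zero, Matrix.cons_val_one,
            Matrix.head_cons, Matrix.cons_val_two, Matrix.cons_val_three, Matrix.cons_val_four,
            cons_val_five', Matrix.tail_cons, Fin.mk_zero, Fin.mk_one, Fin.isValue,
            Fin.reduceFinMk]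
          try ring
  · intro S h1 hmul
    have e1 : (Pi.single 0 1 : Fin 6 → ℂ) ∈ S := h1
    have hb2 : mulN629 l (Pi.single 0 1) (Pi.single 0 1) = Pi.single 1 1 := by
      funext i
      fin_cases i <;>
        · simp [mulN629, Pi.single_apply, cons_val_five', Fin.reduceFinMk]
          try ring_nf
          try norm_num
    have e2 : (Pi.single 1 1 : Fin 6 → ℂ) ∈ S := hb2 ▸ hmul _ e1 _ e1
    have hb3 : mulN629 l (Pi.single 0 1) (Pi.single 1 1) = Pi.single 2 1 := by
      funext i
      fin_cases i <;>
        · simp [mulN629, Pi.single_apply, cons_val_five', Fin.reduceFinMk]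
          try ring_nf
          try norm_num
    have e3 : (Pi.single 2 1 : Fin 6 → ℂ) ∈ S := hb3 ▸ hmul _ e1 _ e2
    have hb4 : (2:ℂ)⁻¹ • (mulN629 l (Pi.single 0 1) (Pi.single 2 1)
        + mulN629 l (Pi.single 1 1) (Pi.single 1 1)) = Pi.single 3 1 := by
      funext i
      fin_cases i <;>
        · simp [mulN629, Pi.single_apply, cons_val_five', Fin.reduceFinMk]
          try ring_nf
          try norm_num
    have e4 : (Pi.single 3 1 : Fin 6 → ℂ) ∈ S :=
      hb4 ▸ S.smul_mem _ (S.add_mem (hmul _ e1 _ e3) (hmul _ e2 _ e2))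
    have hb5 : (3:ℂ)⁻¹ • (mulN629 l (Pi.single 0 1) (Pi.single 3 1)
        + (2:ℂ) • mulN629 l (Pi.single 2 1) (Pi.single 1 1)) = Pi.single 4 1 := by
      funext i
      fin_cases i <;>
        · simp [mulN629, Pi.single_apply, cons_val_five', Fin.reduceFinMk]
          try ring_nf
          try norm_num
    have e5 : (Pi.single 4 1 : Fin 6 → ℂ) ∈ S :=
      hb5 ▸ S.smul_mem _ (S.add_mem (hmul _ e1 _ e4) (S.smul_mem _ (hmul _ e3 _ e2)))
    have hb6 : (4:ℂ)⁻¹ • (mulN629 l (Pi.single 0 1) (Pi.single 4 1)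
        + (3:ℂ) • mulN629 l (Pi.single 4 1) (Pi.single 0 1)) = Pi.single 5 1 := by
      funext i
      fin_cases i <;>
        · simp [mulN629, Pi.single_apply, cons_val_five', Fin.reduceFinMk]
          try ring_nf
          try norm_num
    have e6 : (Pi.single 5 1 : Fin 6 → ℂ) ∈ S :=
      hb6 ▸ S.smul_mem _ (S.add_mem (hmul _ e1 _ e5) (S.smul_mem _ (hmul _ e5 _ e1)))
    rw [eq_top_iff]
    intro x _
    have hx : x = ∑ i : Fin 6, x i • (Pi.single i 1 : Fin 6 → ℂ) := by
      conv_lhs => rw [← Finset.univ_sum_single x]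
      refine Finset.sum_congr rfl fun i _ => ?_
      rw [← Pi.single_smul, smul_eq_mul, mul_one]
    rw [hx]
    refine S.sum_mem fun i _ => S.smul_mem _ ?_
    fin_cases i <;> assumption
end

section
/- Every automorphism φ of the 4-dimensional complex Novikov algebra N⁴₀₁ (with nonzero products e₁e₁ = e₂, e₁e₂ = e₃, e₂e₁ = e₄) has matrix, in the basis e₁, e₂, e₃, e₄, of the form with columns: φ(e₁) = x e₁ + y e₂ + z e₃ + v e₄, φ(e₂) = x² e₂ + xy e₃ + xy e₄, φ(e₃) = x³ e₃, φ(e₄) = x³ e₄, for some x, y, z, v ∈ ℂ with x ≠ 0; conversely every such map is an automorphism. -/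
/-- The 4-dimensional Novikov algebra `N⁴₀₁` over ℂ, with basis `e₁,…,e₄`
and nonzero products `e₁e₁ = e₂`, `e₁e₂ = e₃`, `e₂e₁ = e₄`. -/
noncomputable def mulN401 (a b : Fin 4 → ℂ) : Fin 4 → ℂ :=
  ![0, a 0 * b 0, a 0 * b 1, a 1 * b 0]

/-!
Since `e₂ = e₁e₁`, `e₃ = e₁e₂` and `e₄ = e₂e₁`, a multiplicative linear map is determined by the
image `(x, y, z, v)` of `e₁`, and expanding these products in coordinates gives a lower triangular
matrix with diagonal `x, x², x³, x³`. It is invertible exactly when `x ≠ 0`, and its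
multiplicativity is a polynomial identity in the coordinates.
-/

open Matrix

section N401

variable (x y z v : ℂ)

noncomputable def n401Map : (Fin 4 → ℂ) →ₗ[ℂ] (Fin 4 → ℂ) :=
  toLin' !![x, 0, 0, 0; y, x ^ 2, 0, 0; z, x * y, x ^ 3, 0; v, x * y, 0, x ^ 3]

theorem n401Map_apply (w : Fin 4 → ℂ) :
    n401Map x y z v w = ![x * w 0, y * w 0 + x ^ 2 * w 1, z * w 0 + x * y * w 1 + x ^ 3 * w 2,
      v * w 0 + x * y * w 1 + x ^ 3 * w 3] := by
  ext i; fin_cases i <;> simp [n401Map, mulVec, dotProduct, Fin.sum_univ_four]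

theorem eq_n401Map_iff (f : (Fin 4 → ℂ) →ₗ[ℂ] (Fin 4 → ℂ)) :
    f = n401Map x y z v ↔
      f (Pi.single 0 1) = x • (Pi.single 0 1 : Fin 4 → ℂ) + y • (Pi.single 1 1 : Fin 4 → ℂ)
          + z • (Pi.single 2 1 : Fin 4 → ℂ) + v • (Pi.single 3 1 : Fin 4 → ℂ) ∧
        f (Pi.single 1 1) = x ^ 2 • (Pi.single 1 1 : Fin 4 → ℂ)
          + (x * y) • (Pi.single 2 1 : Fin 4 → ℂ) + (x * y) • (Pi.single 3 1 : Fin 4 → ℂ) ∧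
        f (Pi.single 2 1) = x ^ 3 • (Pi.single 2 1 : Fin 4 → ℂ) ∧
        f (Pi.single 3 1) = x ^ 3 • (Pi.single 3 1 : Fin 4 → ℂ) := by
  have columns : ∀ j : Fin 4, n401Map x y z v (Pi.single j 1) = ![
      x • (Pi.single 0 1 : Fin 4 → ℂ) + y • (Pi.single 1 1 : Fin 4 → ℂ)
        + z • (Pi.single 2 1 : Fin 4 → ℂ) + v • (Pi.single 3 1 : Fin 4 → ℂ),
      x ^ 2 • (Pi.single 1 1 : Fin 4 → ℂ)
        + (x * y) • (Pi.single 2 1 : Fin 4 → ℂ) + (x * y) • (Pi.single 3 1 : Fin 4 → ℂ),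
      x ^ 3 • (Pi.single 2 1 : Fin 4 → ℂ), x ^ 3 • (Pi.single 3 1 : Fin 4 → ℂ)] j := by
    intro j; ext i; fin_cases j <;> fin_cases i <;> simp [n401Map_apply]
  constructor
  · rintro rfl
    exact ⟨columns 0, columns 1, columns 2, columns 3⟩
  · rintro ⟨h0, h1, h2, h3⟩
    refine (Pi.basisFun ℂ (Fin 4)).ext fun j => ?_
    fin_cases j <;> simp [columns, h0, h1, h2, h3]

theorem n401Map_mul (a b : Fin 4 → ℂ) :
    n401Map x y z v (mulN401 a b) = mulN401 (n401Map x y z v a) (n401Map x y z v b) := by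
  ext i; fin_cases i <;> simp [n401Map_apply, mulN401] <;> ring

variable {x}

theorem n401Map_injective (hx : x ≠ 0) : Function.Injective (n401Map x y z v) := by
  rw [← LinearMap.ker_eq_bot, LinearMap.ker_eq_bot']
  intro w hw
  have h i : n401Map x y z v w i = 0 := congrFun hw i
  simp only [n401Map_apply] at h
  have h0 := h 0; have h1 := h 1; have h2 := h 2; have h3 := h 3
  simp [hx] at h0
  simp [hx, h0] at h1
  simp [hx, h0, h1] at h2 h3
  ext i; fin_cases i <;> simp [*]

theorem n401Map_bijective_iff : Function.Bijective (n401Map x y z v) ↔ x ≠ 0 := by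
  refine ⟨fun hbij hx => ?_, fun hx => ?_⟩
  · have hker : n401Map x y z v (Pi.single 2 1) = n401Map x y z v 0 := by
      ext i; fin_cases i <;> simp [n401Map_apply, hx]
    simpa using hbij.injective hker
  · have hinj := n401Map_injective y z v hx
    exact ⟨hinj, LinearMap.injective_iff_surjective.mp hinj⟩

end N401

theorem mulN401_single_zero_single_zero :
    mulN401 (Pi.single 0 1) (Pi.single 0 1) = Pi.single 1 1 := by
  ext i; fin_cases i <;> simp [mulN401]

theorem mulN401_single_zero_single_one :
    mulN401 (Pi.single 0 1) (Pi.single 1 1) = Pi.single 2 1 := by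
  ext i; fin_cases i <;> simp [mulN401]

theorem mulN401_single_one_single_zero :
    mulN401 (Pi.single 1 1) (Pi.single 0 1) = Pi.single 3 1 := by
  ext i; fin_cases i <;> simp [mulN401]

theorem eq_n401Map_of_map_mul (f : (Fin 4 → ℂ) →ₗ[ℂ] (Fin 4 → ℂ))
    (hf : ∀ a b, f (mulN401 a b) = mulN401 (f a) (f b)) :
    f = n401Map (f (Pi.single 0 1) 0) (f (Pi.single 0 1) 1) (f (Pi.single 0 1) 2)
      (f (Pi.single 0 1) 3) := by
  set u := f (Pi.single 0 1)
  have f_e₂ : f (Pi.single 1 1) = mulN401 u u := by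
    rw [← mulN401_single_zero_single_zero, hf]
  have f_e₃ : f (Pi.single 2 1) = mulN401 u (mulN401 u u) := by
    rw [← mulN401_single_zero_single_one, hf, f_e₂]
  have f_e₄ : f (Pi.single 3 1) = mulN401 (mulN401 u u) u := by
    rw [← mulN401_single_one_single_zero, hf, f_e₂]
  refine (Pi.basisFun ℂ (Fin 4)).ext fun j => ?_
  fin_cases j <;> ext i <;> fin_cases i <;>
    simp [f_e₂, f_e₃, f_e₄, n401Map_apply, mulN401, u] <;> ring

/-- Every automorphism `φ` of `N⁴₀₁` satisfies
`φ(e₁) = x e₁ + y e₂ + z e₃ + v e₄`, `φ(e₂) = x² e₂ + xy e₃ + xy e₄`,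
`φ(e₃) = x³ e₃`, `φ(e₄) = x³ e₄` for some `x, y, z, v ∈ ℂ` with `x ≠ 0`;
conversely, every linear map of this form is an automorphism. -/
theorem N401_automorphisms :
    (∀ φ : (Fin 4 → ℂ) ≃ₗ[ℂ] (Fin 4 → ℂ),
      (∀ a b : Fin 4 → ℂ, φ (mulN401 a b) = mulN401 (φ a) (φ b)) →
      ∃ x y z v : ℂ, x ≠ 0 ∧
        φ (Pi.single 0 1) = x • (Pi.single 0 1 : Fin 4 → ℂ)
          + y • (Pi.single 1 1 : Fin 4 → ℂ)
          + z • (Pi.single 2 1 : Fin 4 → ℂ)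
          + v • (Pi.single 3 1 : Fin 4 → ℂ) ∧
        φ (Pi.single 1 1) = x ^ 2 • (Pi.single 1 1 : Fin 4 → ℂ)
          + (x * y) • (Pi.single 2 1 : Fin 4 → ℂ)
          + (x * y) • (Pi.single 3 1 : Fin 4 → ℂ) ∧
        φ (Pi.single 2 1) = x ^ 3 • (Pi.single 2 1 : Fin 4 → ℂ) ∧
        φ (Pi.single 3 1) = x ^ 3 • (Pi.single 3 1 : Fin 4 → ℂ)) ∧
    (∀ (ψ : (Fin 4 → ℂ) →ₗ[ℂ] (Fin 4 → ℂ)) (x y z v : ℂ), x ≠ 0 →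
      ψ (Pi.single 0 1) = x • (Pi.single 0 1 : Fin 4 → ℂ)
        + y • (Pi.single 1 1 : Fin 4 → ℂ)
        + z • (Pi.single 2 1 : Fin 4 → ℂ)
        + v • (Pi.single 3 1 : Fin 4 → ℂ) →
      ψ (Pi.single 1 1) = x ^ 2 • (Pi.single 1 1 : Fin 4 → ℂ)
        + (x * y) • (Pi.single 2 1 : Fin 4 → ℂ)
        + (x * y) • (Pi.single 3 1 : Fin 4 → ℂ) →
      ψ (Pi.single 2 1) = x ^ 3 • (Pi.single 2 1 : Fin 4 → ℂ) →
      ψ (Pi.single 3 1) = x ^ 3 • (Pi.single 3 1 : Fin 4 → ℂ) →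
      Function.Bijective ψ ∧
        ∀ a b : Fin 4 → ℂ, ψ (mulN401 a b) = mulN401 (ψ a) (ψ b)) := by
  refine ⟨fun φ hφ => ?_, fun ψ x y z v hx h₀ h₁ h₂ h₃ => ?_⟩
  · have hφ_eq := eq_n401Map_of_map_mul φ.toLinearMap hφ
    have hφ_bij : Function.Bijective (φ : (Fin 4 → ℂ) →ₗ[ℂ] (Fin 4 → ℂ)) := φ.bijective
    have hx := (n401Map_bijective_iff _ _ _).mp (hφ_eq ▸ hφ_bij)
    exact ⟨_, _, _, _, hx, (eq_n401Map_iff _ _ _ _ _).mp hφ_eq⟩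
  · obtain rfl := (eq_n401Map_iff x y z v ψ).mpr ⟨h₀, h₁, h₂, h₃⟩
    exact ⟨(n401Map_bijective_iff y z v).mpr hx, n401Map_mul x y z v⟩
end

section
/- The 2-dimensional complex algebra N²₀₁ with basis e₁, e₂ and the single nonzero product e₁e₁ = e₂ is, up to isomorphism, the unique 2-dimensional one-generated nilpotent Novikov algebra: every 2-dimensional nilpotent Novikov algebra over ℂ generated by one element is isomorphic to N²₀₁. -/
/-- The 2-dimensional algebra `N²₀₁` over ℂ, with basis `e₁, e₂` and single
nonzero product `e₁e₁ = e₂`. -/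
noncomputable def mulN201 (a b : Fin 2 → ℂ) : Fin 2 → ℂ :=
  ![0, a 0 * b 0]

/-!
Nilpotency forces `A² ≠ A` and, when `A² ≠ 0`, also `A·A² + A²·A ≠ A²`. In dimension 2 this
strict chain `A ⊋ A² ⊋ A·A² + A²·A` leaves no room, so all products of three elements vanish.
Then `span {g, g²}` is closed under multiplication, hence equal to `A`, and in the basis `g, g²`
the product reads `(a₁g + a₂g²)(b₁g + b₂g²) = a₁b₁ g²`, which is `N²₀₁`.
-/

open Module Submodule

local notation:70 S:70 " ⊛ " T:71 => Submodule.map₂ (LinearMap.mul _ _) S T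

section PowerFiltration

variable {K A : Type*} [CommRing K] [NonUnitalNonAssocRing A] [Module K A]

structure IsPowerFiltration (P : ℕ → Submodule K A) : Prop where
  one : P 1 = ⊤
  succ : ∀ k : ℕ, 1 ≤ k → P (k + 1) =
    ⨆ (i : ℕ) (j : ℕ) (_ : 1 ≤ i) (_ : 1 ≤ j) (_ : i + j = k + 1),
      span K {z : A | ∃ x ∈ P i, ∃ y ∈ P j, z = x * y}

namespace IsPowerFiltration

variable {P : ℕ → Submodule K A}

theorem mul_mem (hP : IsPowerFiltration P) {i j : ℕ} (hi : 1 ≤ i) (hj : 1 ≤ j) {x y : A}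
    (hx : x ∈ P i) (hy : y ∈ P j) : x * y ∈ P (i + j) := by
  obtain ⟨k, hk⟩ : ∃ k, i + j = k + 1 := ⟨i + j - 1, by omega⟩
  rw [hk, hP.succ k (by omega)]
  exact mem_iSup_of_mem i <| mem_iSup_of_mem j <| mem_iSup_of_mem hi <| mem_iSup_of_mem hj <|
    mem_iSup_of_mem hk <| subset_span ⟨x, hx, y, hy, rfl⟩

variable [SMulCommClass K A A] [IsScalarTower K A A]

theorem le_of_le_mul_sup_mul (hP : IsPowerFiltration P) {M : Submodule K A}
    (hM : M ≤ ⊤ ⊛ M ⊔ M ⊛ ⊤) {k : ℕ} (hk : 1 ≤ k) : M ≤ P k := by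
  induction k, hk using Nat.le_induction with
  | base => simp [hP.one]
  | succ k hk ih =>
    refine hM.trans (sup_le (map₂_le.2 fun x _ y hy => ?_) (map₂_le.2 fun x hx y _ => ?_))
    · simpa [add_comm] using hP.mul_mem le_rfl hk (hP.one ▸ mem_top) (ih hy)
    · simpa using hP.mul_mem hk le_rfl (ih hx) (hP.one ▸ mem_top)

theorem eq_bot_of_le_mul_sup_mul (hP : IsPowerFiltration P) {n : ℕ} (hn : 1 ≤ n)
    (hPn : P n = ⊥) {M : Submodule K A} (hM : M ≤ ⊤ ⊛ M ⊔ M ⊛ ⊤) : M = ⊥ :=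
  eq_bot_iff.2 (hPn ▸ hP.le_of_le_mul_sup_mul hM hn)

end IsPowerFiltration

end PowerFiltration

theorem IsPowerFiltration.cube_eq_bot_of_finrank_eq_two {K A : Type*} [Field K]
    [NonUnitalNonAssocRing A] [Module K A] [SMulCommClass K A A] [IsScalarTower K A A]
    {P : ℕ → Submodule K A} (hP : IsPowerFiltration P) {n : ℕ} (hn : 1 ≤ n) (hPn : P n = ⊥)
    (hdim : finrank K A = 2) : ⊤ ⊛ (⊤ ⊛ ⊤) ⊔ (⊤ ⊛ ⊤) ⊛ ⊤ = (⊥ : Submodule K A) := by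
  set Q : Submodule K A := ⊤ ⊛ ⊤
  have hle : ⊤ ⊛ Q ⊔ Q ⊛ ⊤ ≤ Q :=
    sup_le (map₂_le_map₂_right le_top) (map₂_le_map₂_left le_top)
  rcases eq_or_ne Q ⊥ with hQ | hQ
  · exact eq_bot_iff.2 (hle.trans hQ.le)
  have hlt : ⊤ ⊛ Q ⊔ Q ⊛ ⊤ < Q :=
    hle.lt_of_ne fun h => hQ (hP.eq_bot_of_le_mul_sup_mul hn hPn h.ge)
  have hQtop : Q ≠ ⊤ := fun h => hQ <| eq_bot_iff.2 <| le_top.trans <|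
    (hP.eq_bot_of_le_mul_sup_mul hn hPn (le_sup_of_le_left h.ge)).le
  have : FiniteDimensional K A := .of_finrank_eq_succ hdim
  have := finrank_lt_finrank_of_lt hlt
  have := finrank_lt hQtop
  exact finrank_eq_zero.1 (by omega)

section CubeZero

variable {K A : Type*} [CommRing K] [NonUnitalNonAssocRing A] [Module K A]
  [SMulCommClass K A A] [IsScalarTower K A A]

theorem mul_mul_eq_zero_of_cube_eq_bot
    (hA : ⊤ ⊛ (⊤ ⊛ ⊤) ⊔ (⊤ ⊛ ⊤) ⊛ ⊤ = (⊥ : Submodule K A)) (x y z : A) :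
    x * (y * z) = 0 ∧ x * y * z = 0 := by
  rw [← mem_bot K, ← mem_bot K, ← hA]
  exact ⟨mem_sup_left (apply_mem_map₂ _ mem_top (apply_mem_map₂ _ mem_top mem_top)),
    mem_sup_right (apply_mem_map₂ _ (apply_mem_map₂ _ mem_top mem_top) mem_top)⟩

theorem smul_add_smul_mul_smul_add_smul
    (hA : ⊤ ⊛ (⊤ ⊛ ⊤) ⊔ (⊤ ⊛ ⊤) ⊛ ⊤ = (⊥ : Submodule K A)) (g : A) (a b c d : K) :
    (a • g + b • (g * g)) * (c • g + d • (g * g)) = (a * c) • (g * g) := by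
  have h := mul_mul_eq_zero_of_cube_eq_bot hA
  simp [add_mul, mul_add, smul_mul_assoc, mul_smul_comm, (h _ _ _).1, (h _ _ _).2, smul_smul,
    mul_comm]

theorem span_pair_mul_self_eq_top
    (hA : ⊤ ⊛ (⊤ ⊛ ⊤) ⊔ (⊤ ⊛ ⊤) ⊛ ⊤ = (⊥ : Submodule K A)) {g : A}
    (hg : ∀ S : Submodule K A, g ∈ S → (∀ x ∈ S, ∀ y ∈ S, x * y ∈ S) → S = ⊤) :
    span K {g, g * g} = ⊤ :=
  hg _ (subset_span (by simp)) fun x hx y hy => by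
    obtain ⟨a, b, rfl⟩ := mem_span_pair.1 hx
    obtain ⟨c, d, rfl⟩ := mem_span_pair.1 hy
    rw [smul_add_smul_mul_smul_add_smul hA]
    exact smul_mem _ _ (subset_span (by simp))

end CubeZero

theorem Module.Basis.equivFun_mul_eq_mulN201 {A : Type*} [NonUnitalNonAssocRing A]
    [Module ℂ A] [SMulCommClass ℂ A A] [IsScalarTower ℂ A A]
    (hA : ⊤ ⊛ (⊤ ⊛ ⊤) ⊔ (⊤ ⊛ ⊤) ⊛ ⊤ = (⊥ : Submodule ℂ A))
    (b : Basis (Fin 2) ℂ A) (hb : b 1 = b 0 * b 0) (x y : A) :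
    b.equivFun (x * y) = mulN201 (b.equivFun x) (b.equivFun y) := by
  obtain ⟨u, rfl⟩ := b.equivFun.symm.surjective x
  obtain ⟨v, rfl⟩ := b.equivFun.symm.surjective y
  simp only [Basis.equivFun_symm_apply, Fin.sum_univ_two, hb, smul_add_smul_mul_smul_add_smul hA]
  rw [← hb]
  ext i
  fin_cases i <;> simp [mulN201]

theorem two_dimensional_one_generated_nilpotent_novikov_unique_general
    (A : Type*) [NonUnitalNonAssocRing A] [Module ℂ A]
    [SMulCommClass ℂ A A] [IsScalarTower ℂ A A]
    (hdim : Module.finrank ℂ A = 2)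
    (hnil : ∃ P : ℕ → Submodule ℂ A,
      P 1 = ⊤ ∧
      (∀ k : ℕ, 1 ≤ k → P (k + 1) =
        ⨆ (i : ℕ) (j : ℕ) (_ : 1 ≤ i) (_ : 1 ≤ j) (_ : i + j = k + 1),
          Submodule.span ℂ {z : A | ∃ x ∈ P i, ∃ y ∈ P j, z = x * y}) ∧
      ∃ n : ℕ, 1 ≤ n ∧ P n = ⊥)
    (hgen : ∃ g : A, ∀ S : Submodule ℂ A, g ∈ S →
      (∀ x ∈ S, ∀ y ∈ S, x * y ∈ S) → S = ⊤) :
    ∃ φ : A ≃ₗ[ℂ] (Fin 2 → ℂ),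
      ∀ a b : A, φ (a * b) = mulN201 (φ a) (φ b) := by
  obtain ⟨P, hP1, hPsucc, n, hn, hPn⟩ := hnil
  obtain ⟨g, hg⟩ := hgen
  have hA := IsPowerFiltration.cube_eq_bot_of_finrank_eq_two ⟨hP1, hPsucc⟩ hn hPn hdim
  have hspan : ⊤ ≤ span ℂ (Set.range ![g, g * g]) := by
    rw [Matrix.range_cons_cons_empty, span_pair_mul_self_eq_top hA hg]
  let b := basisOfTopLeSpanOfCardEqFinrank ![g, g * g] hspan (by simp [hdim])
  exact ⟨b.equivFun, b.equivFun_mul_eq_mulN201 hA (by simp [b])⟩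

/-- Up to isomorphism, `N²₀₁` is the unique 2-dimensional one-generated
nilpotent Novikov algebra over ℂ: every 2-dimensional nilpotent Novikov
algebra generated by a single element is isomorphic to `N²₀₁`. -/
theorem two_dimensional_one_generated_nilpotent_novikov_unique
    (A : Type*) [NonUnitalNonAssocRing A] [Module ℂ A]
    [SMulCommClass ℂ A A] [IsScalarTower ℂ A A]
    (hrc : ∀ x y z : A, (x * y) * z = (x * z) * y)
    (hls : ∀ x y z : A, (x * y) * z - x * (y * z) = (y * x) * z - y * (x * z))
    (hdim : Module.finrank ℂ A = 2)
    (hnil : ∃ P : ℕ → Submodule ℂ A,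
      P 1 = ⊤ ∧
      (∀ k : ℕ, 1 ≤ k → P (k + 1) =
        ⨆ (i : ℕ) (j : ℕ) (_ : 1 ≤ i) (_ : 1 ≤ j) (_ : i + j = k + 1),
          Submodule.span ℂ {z : A | ∃ x ∈ P i, ∃ y ∈ P j, z = x * y}) ∧
      ∃ n : ℕ, 1 ≤ n ∧ P n = ⊥)
    (hgen : ∃ g : A, ∀ S : Submodule ℂ A, g ∈ S →
      (∀ x ∈ S, ∀ y ∈ S, x * y ∈ S) → S = ⊤) :
    ∃ φ : A ≃ₗ[ℂ] (Fin 2 → ℂ),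
      ∀ a b : A, φ (a * b) = mulN201 (φ a) (φ b) :=
  two_dimensional_one_generated_nilpotent_novikov_unique_general A hdim hnil hgen
end
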